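/- arXiv:1911.06781 — 4 statements merged into one kernel-verified Lean document; each statement's English description precedes it below -/
import Mathlib

section
/- Let a > -1, a_n = Γ(a+1)Γ(n)/Γ(n+a), and b_n = ∑_{k=1}^n 1/a_k. Then lim_{n→∞} b_n / n^{a+1} = 1/Γ(a+2). -/
open Filter

/-!
The reciprocals `1 / a_k = Γ(k + a) / (Γ(k) Γ(a + 1))` telescope: `f n = Γ(n + a + 1) / Γ(n)`
satisfies `f (n + 1) - f n = (a + 1) Γ(n + 1 + a) / Γ(n + 1)`, so
`b_n = Γ(n + a + 1) / (Γ(n) Γ(a + 2))`. Euler's limit formula `GammaSeq s n → Γ(s)` at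
`s = a + 1` is equivalent to `Γ(n + s) / (Γ(n) n ^ s) → 1`, which gives the limit.
-/

noncomputable def aseq (a : ℝ) (n : ℕ) : ℝ :=
  Real.Gamma (a + 1) * Real.Gamma n / Real.Gamma ((n : ℝ) + a)

noncomputable def bseq (a : ℝ) (n : ℕ) : ℝ := ∑ k ∈ Finset.Icc 1 n, (aseq a k)⁻¹

open Topology

namespace Real

theorem Gamma_mul_prod_range_add {s : ℝ} (hs : ∀ m : ℕ, s ≠ -m) (n : ℕ) :
    Gamma s * ∏ j ∈ Finset.range n, (s + j) = Gamma (s + n) := by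
  induction n with
  | zero => simp
  | succ n ih =>
    have hsn : s + n ≠ 0 := fun h => hs n (by linarith)
    rw [Finset.prod_range_succ, ← mul_assoc, ih, Nat.cast_succ, ← add_assoc,
      Gamma_add_one hsn, mul_comm]

theorem Gamma_add_ne_zero {s : ℝ} (hs : ∀ m : ℕ, s ≠ -m) (n : ℕ) : Gamma (n + s) ≠ 0 :=
  Gamma_ne_zero fun m h => hs (m + n) (by push_cast; linarith)

theorem GammaSeq_div_Gamma {s : ℝ} (hs : ∀ m : ℕ, s ≠ -m) {n : ℕ} (hn : n ≠ 0) :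
    GammaSeq s n / Gamma s = n / (n + s) / (Gamma (n + s) / (Gamma n * (n : ℝ) ^ s)) := by
  have hn' : (n : ℝ) ≠ 0 := Nat.cast_ne_zero.mpr hn
  have hns : (n : ℝ) + s ≠ 0 := fun h => hs n (by linarith)
  have hprod : ∏ j ∈ Finset.range (n + 1), (s + j) = (n + s) * Gamma (n + s) / Gamma s := by
    rw [eq_div_iff (Gamma_ne_zero hs), mul_comm, Gamma_mul_prod_range_add hs, Nat.cast_succ,
      ← add_assoc, add_comm s, Gamma_add_one hns]
  have hfact : (n.factorial : ℝ) = n * Gamma n := by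
    rw [← Gamma_nat_eq_factorial, Gamma_add_one hn']
  have hn_pos : (0 : ℝ) < n := by positivity
  have hGns := Gamma_add_ne_zero hs n
  have hGs := Gamma_ne_zero hs
  have hGn := (Gamma_pos_of_pos hn_pos).ne'
  have hpow := (rpow_pos_of_pos hn_pos s).ne'
  rw [GammaSeq, hprod, hfact]
  field_simp

theorem tendsto_Gamma_add_div_Gamma_mul_rpow {s : ℝ} (hs : ∀ m : ℕ, s ≠ -m) :
    Tendsto (fun n : ℕ => Gamma (n + s) / (Gamma n * (n : ℝ) ^ s)) atTop (𝓝 1) := by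
  have hGammaSeq : Tendsto (fun n => GammaSeq s n / Gamma s) atTop (𝓝 1) := by
    simpa [div_self (Gamma_ne_zero hs)] using (GammaSeq_tendsto_Gamma s).div_const (Gamma s)
  have := (tendsto_natCast_div_add_atTop s).div hGammaSeq one_ne_zero
  rw [div_one] at this
  refine this.congr' ?_
  filter_upwards [eventually_ne_atTop 0] with n hn
  rw [Pi.div_apply, GammaSeq_div_Gamma hs hn, div_div_cancel₀]
  exact div_ne_zero (Nat.cast_ne_zero.mpr hn) fun h => hs n (by linarith)

/-- At `n = 0` both sides involve the junk value `Gamma 0 = 0`. -/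
theorem Gamma_add_div_Gamma_succ_sub {s : ℝ} (n : ℕ) (hns : (n : ℝ) + s ≠ 0) :
    Gamma (↑(n + 1) + s) / Gamma ↑(n + 1) - Gamma (n + s) / Gamma n
      = s * (Gamma (n + s) / Gamma ↑(n + 1)) := by
  have hshift : Gamma (n + s) / Gamma n = n * (Gamma (n + s) / Gamma ↑(n + 1)) := by
    rcases eq_or_ne n 0 with rfl | hn
    · simp [Gamma_zero]
    · rw [Nat.cast_succ, Gamma_add_one (Nat.cast_ne_zero.mpr hn)]
      field_simp
  rw [hshift, Nat.cast_succ, add_right_comm, Gamma_add_one hns]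
  ring

end Real

open Real

theorem inv_aseq (a : ℝ) (n : ℕ) :
    (aseq a n)⁻¹ = Gamma (n + a) / Gamma n / Gamma (a + 1) := by
  rw [aseq, inv_div, div_div, mul_comm]

theorem bseq_eq {a : ℝ} (ha : ∀ m : ℕ, a + 1 ≠ -m) (n : ℕ) :
    bseq a n = Gamma (n + (a + 1)) / Gamma n / Gamma (a + 2) := by
  induction n with
  | zero => simp [bseq, Gamma_zero]
  | succ n ih =>
    rw [bseq, Finset.sum_Icc_succ_top (by omega), ← bseq, ih, inv_aseq]
    have hna : (n : ℝ) + (a + 1) ≠ 0 := fun h => ha n (by linarith)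
    have hstep := Gamma_add_div_Gamma_succ_sub n hna
    have ha1 : a + 1 ≠ 0 := by simpa using ha 0
    have hGa2 : Gamma (a + 2) = (a + 1) * Gamma (a + 1) := by
      rw [← Gamma_add_one ha1]; ring_nf
    have hGa1 := Gamma_ne_zero ha
    rw [show (↑(n + 1) : ℝ) + a = n + (a + 1) by push_cast; ring, eq_add_of_sub_eq' hstep, hGa2]
    field_simp

/-- With `a > -1`, `b_n / n^{a+1} → 1/Γ(a+2)`. -/
theorem stmt_3 (a : ℝ) (ha : -1 < a) :
    Tendsto (fun n : ℕ => bseq a n / (n : ℝ) ^ (a + 1)) atTop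
      (nhds (1 / Real.Gamma (a + 2))) := by
  have hs : ∀ m : ℕ, a + 1 ≠ -m := fun m h => by linarith [(m.cast_nonneg : (0 : ℝ) ≤ m)]
  refine ((tendsto_Gamma_add_div_Gamma_mul_rpow hs).div_const (Gamma (a + 2))).congr fun n => ?_
  rw [bseq_eq hs]
  ring
end

section
/- Let a < 1/2, a_n = Γ(a+1)Γ(n)/Γ(n+a), and b_n = ∑_{k=1}^n 1/a_k. Then lim_{n→∞} (b_n^2/n^3) ∑_{k=1}^n a_k^2 = 1/((1-2a)(a+1)^2). -/
/-!
Euler's limit formula gives `Γ(n + a) ~ n^a Γ(n)`, hence `a_n ~ Γ(a+1) n^(-a)`. Summing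
asymptotic equivalences of positive terms (Stolz–Cesàro) turns `k^p` into `n^(p+1)/(p+1)`, so
`b_n ~ n^(a+1) / ((a+1) Γ(a+1))` and `∑ a_k² ~ Γ(a+1)² n^(1-2a) / (1-2a)`; the powers of `n` and
of `Γ(a+1)` cancel in the product.
-/

open Filter

open Asymptotics Finset Topology

theorem Asymptotics.IsEquivalent.sum_range {f g : ℕ → ℝ} (h : f ~[atTop] g) (hg : 0 ≤ g)
    (hg_sum : Tendsto (fun n ↦ ∑ i ∈ range n, g i) atTop atTop) :
    (fun n ↦ ∑ i ∈ range n, f i) ~[atTop] fun n ↦ ∑ i ∈ range n, g i :=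
  (h.isLittleO.sum_range hg hg_sum).congr_left fun n ↦ by simp [sum_sub_distrib]

theorem isEquivalent_sum_range_rpow {p : ℝ} (hp : -1 < p) :
    (fun n : ℕ ↦ ∑ i ∈ range n, ((i : ℝ) + 1) ^ p) ~[atTop]
      fun n ↦ (n : ℝ) ^ (p + 1) / (p + 1) := by
  have hq : 0 < p + 1 := by linarith
  -- the telescoping increments of `n ^ (p + 1) / (p + 1)`
  set g : ℕ → ℝ := fun i ↦ (((i : ℝ) + 1) ^ (p + 1) - (i : ℝ) ^ (p + 1)) / (p + 1)
  have hg_nonneg : 0 ≤ g := fun i ↦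
    div_nonneg (sub_nonneg.2 (Real.rpow_le_rpow (by positivity) (by linarith) hq.le)) hq.le
  have hg_sum : ∀ n, ∑ i ∈ range n, g i = (n : ℝ) ^ (p + 1) / (p + 1) := fun n ↦ by
    have := sum_range_sub (fun i : ℕ ↦ (i : ℝ) ^ (p + 1)) n
    push_cast at this
    simp [g, ← sum_div, this, Real.zero_rpow hq.ne']
  simp only [← hg_sum]
  -- `(p + 1) g i / (i + 1) ^ p` is the slope of `x ↦ x ^ (p + 1)` between `i / (i + 1)` and `1`
  have hslope : Tendsto (fun i : ℕ ↦ slope (fun x : ℝ ↦ x ^ (p + 1)) 1 ((i : ℝ) / (i + 1)))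
      atTop (𝓝 (p + 1)) := by
    have hd := (Real.hasDerivAt_rpow_const (p := p + 1) (Or.inl one_ne_zero)).tendsto_slope
    simp only [Real.one_rpow, mul_one, add_sub_cancel_right] at hd
    refine hd.comp (tendsto_nhdsWithin_iff.2 ⟨?_, Eventually.of_forall fun i ↦ ?_⟩)
    · simpa using tendsto_natCast_div_add_atTop (1 : ℝ)
    · exact ((div_lt_one (by positivity)).2 (lt_add_one (i : ℝ))).ne
  refine IsEquivalent.sum_range (isEquivalent_of_tendsto_one ?_).symm hg_nonneg ?_
  · have := hslope.div_const (p + 1)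
    rw [div_self hq.ne'] at this
    refine this.congr fun i ↦ ?_
    have hi : (0 : ℝ) < i + 1 := by positivity
    simp only [slope_def_field, Pi.div_apply, g, Real.one_rpow]
    rw [Real.div_rpow (Nat.cast_nonneg i) hi.le, Real.rpow_add hi, Real.rpow_one]
    field_simp
    ring
  · simp only [hg_sum]
    exact (tendsto_rpow_atTop hq).comp tendsto_natCast_atTop_atTop |>.atTop_div_const hq

theorem Finset.sum_Icc_one_eq_sum_range {M : Type*} [AddCommMonoid M] (f : ℕ → M) (n : ℕ) :
    ∑ k ∈ Icc 1 n, f k = ∑ i ∈ range n, f (i + 1) := by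
  rw [← Ico_add_one_right_eq_Icc, sum_Ico_eq_sum_range]
  simp [add_comm]

theorem isEquivalent_sum_Icc_of_isEquivalent_rpow {p L : ℝ} (hp : -1 < p) (hL : 0 < L)
    {c : ℕ → ℝ} (hc : c ~[atTop] fun k ↦ L * (k : ℝ) ^ p) :
    (fun n ↦ ∑ k ∈ Icc 1 n, c k) ~[atTop] fun n ↦ L * (n : ℝ) ^ (p + 1) / (p + 1) := by
  have hpow : (fun n : ℕ ↦ L * ∑ i ∈ range n, ((i : ℝ) + 1) ^ p) ~[atTop]
      fun n ↦ L * ((n : ℝ) ^ (p + 1) / (p + 1)) :=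
    IsEquivalent.refl.mul (isEquivalent_sum_range_rpow hp)
  have hshift : (fun i : ℕ ↦ c (i + 1)) ~[atTop] fun i ↦ L * ((i : ℝ) + 1) ^ p := by
    have := hc.comp_tendsto (tendsto_add_atTop_nat 1)
    simp only [Function.comp_def] at this
    exact_mod_cast this
  simp only [sum_Icc_one_eq_sum_range]
  refine (hshift.sum_range (fun i ↦ by positivity) ?_).trans ?_
  · simp only [← mul_sum]
    exact hpow.symm.tendsto_atTop <| (tendsto_rpow_atTop (by linarith)).comp
      tendsto_natCast_atTop_atTop |>.atTop_div_const (by linarith) |>.const_mul_atTop hL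
  · simpa only [← mul_sum, mul_div_assoc] using hpow

namespace Real

theorem Gamma_add_nat_eq_prod_mul {s : ℝ} (hs : 0 < s) (n : ℕ) :
    Gamma (s + n) = (∏ j ∈ range n, (s + j)) * Gamma s := by
  induction n with
  | zero => simp
  | succ n ih =>
    rw [Nat.cast_succ, ← add_assoc, Gamma_add_one (by positivity), ih, prod_range_succ]
    ring

/-- Euler's limit formula `GammaSeq s n → Γ(s)`, after `∏_{j ≤ n} (s + j) = Γ(s + n + 1) / Γ(s)`
and `n! = n Γ(n)`. -/
theorem isEquivalent_Gamma_natCast_add_add_one {s : ℝ} (hs : 0 < s) :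
    (fun n : ℕ ↦ Gamma (n + (s + 1))) ~[atTop] fun n ↦ (n : ℝ) ^ (s + 1) * Gamma n := by
  have hΓs := Gamma_pos_of_pos hs
  have hlim := (GammaSeq_tendsto_Gamma s).div_const (Gamma s)
  rw [div_self hΓs.ne'] at hlim
  refine (isEquivalent_of_tendsto_one (hlim.congr' ?_)).symm
  filter_upwards [eventually_ge_atTop 1] with n hn
  have hn0 : (0 : ℝ) < n := by exact_mod_cast hn
  have hprod := Gamma_add_nat_eq_prod_mul hs (n + 1)
  rw [GammaSeq, Pi.div_apply, rpow_add_one hn0.ne', ← Gamma_nat_eq_factorial,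
    Gamma_add_one hn0.ne']
  push_cast at hprod
  rw [show (n : ℝ) + (s + 1) = s + (n + 1) by ring, hprod]
  have : ∏ j ∈ range (n + 1), (s + j) ≠ 0 := prod_ne_zero_iff.2 fun j _ ↦ by positivity
  field_simp

theorem isEquivalent_Gamma_natCast_add_of_add_one {s : ℝ}
    (h : (fun n : ℕ ↦ Gamma (n + (s + 1))) ~[atTop] fun n ↦ (n : ℝ) ^ (s + 1) * Gamma n) :
    (fun n : ℕ ↦ Gamma (n + s)) ~[atTop] fun n ↦ (n : ℝ) ^ s * Gamma n := by
  have hlin : (fun n : ℕ ↦ (n : ℝ) + s) ~[atTop] fun n ↦ (n : ℝ) :=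
    IsEquivalent.refl.add_isLittleO <|
      (isLittleO_const_id_atTop s).comp_tendsto tendsto_natCast_atTop_atTop
  refine ((h.div hlin).congr_left ?_).congr_right ?_
  · filter_upwards [eventually_gt_atTop ⌈-s⌉₊] with n hn
    have hns : (0 : ℝ) < n + s := by linarith [Nat.lt_of_ceil_lt hn]
    simp only [Pi.div_apply]
    rw [← add_assoc, Gamma_add_one hns.ne']
    field_simp
  · filter_upwards [eventually_ge_atTop 1] with n hn
    have hn0 : (0 : ℝ) < n := by exact_mod_cast hn
    simp only [Pi.div_apply]
    rw [rpow_add_one hn0.ne']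
    field_simp

theorem isEquivalent_Gamma_natCast_add {a : ℝ} (ha : -1 < a) :
    (fun n : ℕ ↦ Gamma (n + a)) ~[atTop] fun n ↦ (n : ℝ) ^ a * Gamma n :=
  isEquivalent_Gamma_natCast_add_of_add_one <| isEquivalent_Gamma_natCast_add_of_add_one <|
    by simpa [add_assoc] using isEquivalent_Gamma_natCast_add_add_one (s := a + 1) (by linarith)

end Real

theorem isEquivalent_aseq {a : ℝ} (ha : -1 < a) :
    aseq a ~[atTop] fun k ↦ Real.Gamma (a + 1) * (k : ℝ) ^ (-a) := by
  refine (IsEquivalent.refl.div (Real.isEquivalent_Gamma_natCast_add ha)).congr_right ?_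
  filter_upwards [eventually_ge_atTop 1] with k hk
  have hk0 : (0 : ℝ) < k := by exact_mod_cast hk
  have := (Real.Gamma_pos_of_pos hk0).ne'
  simp only [Pi.div_apply, Real.rpow_neg hk0.le]
  field_simp

theorem isEquivalent_inv_aseq {a : ℝ} (ha : -1 < a) :
    (fun k ↦ (aseq a k)⁻¹) ~[atTop] fun k ↦ (Real.Gamma (a + 1))⁻¹ * (k : ℝ) ^ a := by
  refine (isEquivalent_aseq ha).inv.congr_right (Eventually.of_forall fun k ↦ ?_)
  simp [Real.rpow_neg (Nat.cast_nonneg k), mul_comm]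

theorem isEquivalent_aseq_sq {a : ℝ} (ha : -1 < a) :
    (fun k ↦ aseq a k ^ 2) ~[atTop] fun k ↦ Real.Gamma (a + 1) ^ 2 * (k : ℝ) ^ (-2 * a) := by
  refine ((isEquivalent_aseq ha).pow 2).congr_right (Eventually.of_forall fun k ↦ ?_)
  simp [mul_pow, ← Real.rpow_mul_natCast (Nat.cast_nonneg k), mul_comm]

/-- For `-1 < a < 1/2`, `(b_n² / n³) ∑_{k=1}^n a_k² → 1/((1-2a)(a+1)²)`. -/
theorem stmt_4 (a : ℝ) (ha : -1 < a) (ha2 : a < 1 / 2) :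
    Tendsto (fun n : ℕ =>
        (bseq a n) ^ 2 / (n : ℝ) ^ 3 * ∑ k ∈ Finset.Icc 1 n, (aseq a k) ^ 2)
      atTop (nhds (1 / ((1 - 2 * a) * (a + 1) ^ 2))) := by
  have hΓ : 0 < Real.Gamma (a + 1) := Real.Gamma_pos_of_pos (by linarith)
  have hb := isEquivalent_sum_Icc_of_isEquivalent_rpow ha (inv_pos.2 hΓ) (isEquivalent_inv_aseq ha)
  have hS := isEquivalent_sum_Icc_of_isEquivalent_rpow (by linarith) (pow_pos hΓ 2)
    (isEquivalent_aseq_sq ha)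
  have h := ((hb.pow 2).div (IsEquivalent.refl (u := fun n : ℕ ↦ (n : ℝ) ^ 3))).mul hS
  refine (h.congr_right ?_).symm.tendsto_nhds tendsto_const_nhds
  filter_upwards [eventually_ge_atTop 1] with n hn
  have hn0 : (0 : ℝ) < n := by exact_mod_cast hn
  have hpow : ((n : ℝ) ^ (a + 1)) ^ 2 * (n : ℝ) ^ (-2 * a + 1) = (n : ℝ) ^ 3 := by
    rw [← Real.rpow_mul_natCast hn0.le, ← Real.rpow_add hn0, ← Real.rpow_natCast]
    congr 1
    push_cast
    ring
  simp only [Pi.mul_apply, Pi.div_apply, Pi.pow_apply]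
  calc _ = (Real.Gamma (a + 1))⁻¹ ^ 2 * Real.Gamma (a + 1) ^ 2
        * (((n : ℝ) ^ (a + 1)) ^ 2 * (n : ℝ) ^ (-2 * a + 1)) / (n : ℝ) ^ 3
        / (1 - 2 * a) * (a + 1)⁻¹ ^ 2 := by ring
    _ = _ := by
      rw [hpow]
      field_simp
end

section
/- Let a < 1/2, a_n = Γ(a+1)Γ(n)/Γ(n+a), and b_n = ∑_{k=1}^n 1/a_k with b_0 = 0. Then lim_{n→∞} (1/n^3) ∑_{k=1}^n a_k^2 b_{k-1}^2 = 1/(3(a+1)^2). -/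
open Filter Topology

section

variable {a : ℝ}

lemma aseq_succ_pos (ha : -1 < a) (n : ℕ) : 0 < aseq a (n + 1) := by
  unfold aseq
  push_cast
  have hn : (0 : ℝ) ≤ n := n.cast_nonneg
  have h₁ := Real.Gamma_pos_of_pos (show (0 : ℝ) < a + 1 by linarith)
  have h₂ := Real.Gamma_pos_of_pos (show (0 : ℝ) < n + 1 by linarith)
  have h₃ := Real.Gamma_pos_of_pos (show (0 : ℝ) < n + 1 + a by linarith)
  positivity

lemma aseq_succ_succ_div (ha : -1 < a) (n : ℕ) :
    aseq a (n + 2) / aseq a (n + 1) = (n + 1) / ((n + 1 : ℝ) + a) := by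
  have hn : (0 : ℝ) ≤ n := n.cast_nonneg
  have hGn := (Real.Gamma_pos_of_pos (show (0 : ℝ) < n + 1 by linarith)).ne'
  have hGna := (Real.Gamma_pos_of_pos (show (0 : ℝ) < n + 1 + a by linarith)).ne'
  have hGa := (Real.Gamma_pos_of_pos (show (0 : ℝ) < a + 1 by linarith)).ne'
  unfold aseq
  push_cast
  rw [show (n : ℝ) + 2 = (n + 1) + 1 by ring, show (n + 1 + 1 : ℝ) + a = ((n + 1) + a) + 1 by ring,
    Real.Gamma_add_one (s := (n : ℝ) + 1) (by linarith),
    Real.Gamma_add_one (s := (n : ℝ) + 1 + a) (by linarith)]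
  field_simp

lemma bseq_succ (n : ℕ) : bseq a (n + 1) = bseq a n + (aseq a (n + 1))⁻¹ :=
  Finset.sum_Icc_succ_top (by omega) _

lemma aseq_succ_mul_bseq (ha : -1 < a) (n : ℕ) :
    aseq a (n + 1) * bseq a n = n / (a + 1) := by
  induction n with
  | zero => simp [bseq]
  | succ n ih =>
    have hn : (0 : ℝ) ≤ n := n.cast_nonneg
    have hA := (aseq_succ_pos ha n).ne'
    calc aseq a (n + 1 + 1) * bseq a (n + 1)
        = aseq a (n + 2) / aseq a (n + 1) * (aseq a (n + 1) * bseq a n + 1) := by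
          rw [bseq_succ]; field_simp
      _ = (n + 1) / ((n + 1 : ℝ) + a) * (n / (a + 1) + 1) := by rw [aseq_succ_succ_div ha, ih]
      _ = (n + 1 : ℕ) / (a + 1) := by
          have : (n + 1 : ℝ) + a ≠ 0 := by linarith
          have : a + 1 ≠ 0 := by linarith
          push_cast
          field_simp
          ring

end

lemma sum_range_sq (n : ℕ) :
    ∑ j ∈ Finset.range n, (j : ℝ) ^ 2 = n * (n - 1) * (2 * n - 1) / 6 := by
  induction n with
  | zero => simp
  | succ n ih =>
    rw [Finset.sum_range_succ, ih]
    push_cast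
    ring

lemma tendsto_sum_range_sq_div_cube :
    Tendsto (fun n : ℕ => 1 / (n : ℝ) ^ 3 * ∑ j ∈ Finset.range n, (j : ℝ) ^ 2) atTop (𝓝 (1 / 3)) := by
  have h₀ : Tendsto (fun n : ℕ => 1 / (n : ℝ)) atTop (𝓝 0) := tendsto_one_div_atTop_nhds_zero_nat
  have hlim := ((tendsto_const_nhds (x := (1 : ℝ))).sub h₀).mul
    ((tendsto_const_nhds (x := (2 : ℝ))).sub h₀) |>.div_const 6
  norm_num at hlim
  refine hlim.congr' ?_
  filter_upwards [eventually_ne_atTop 0] with n hn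
  rw [sum_range_sq]
  field_simp

theorem stmt_6_general (a : ℝ) (ha : -1 < a) :
    Tendsto (fun n : ℕ =>
        1 / (n : ℝ) ^ 3 * ∑ k ∈ Finset.Icc 1 n, (aseq a k) ^ 2 * (bseq a (k - 1)) ^ 2)
      atTop (nhds (1 / (3 * (a + 1) ^ 2))) := by
  have hsum (n : ℕ) : ∑ k ∈ Finset.Icc 1 n, (aseq a k) ^ 2 * (bseq a (k - 1)) ^ 2
      = (∑ j ∈ Finset.range n, (j : ℝ) ^ 2) / (a + 1) ^ 2 := by
    rw [← Finset.Ico_add_one_right_eq_Icc, Finset.sum_Ico_eq_sum_range, Finset.sum_div]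
    refine Finset.sum_congr rfl fun j _ => ?_
    rw [add_comm 1 j, Nat.add_sub_cancel, ← mul_pow, aseq_succ_mul_bseq ha, div_pow]
  have hlim := tendsto_sum_range_sq_div_cube.div_const ((a + 1) ^ 2)
  rw [div_div] at hlim
  refine hlim.congr fun n => ?_
  rw [hsum, mul_div_assoc]

/-- For `-1 < a < 1/2`, `(1/n³) ∑_{k=1}^n a_k² b_{k-1}² → 1/(3(a+1)²)`. -/
theorem stmt_6 (a : ℝ) (ha : -1 < a) (ha2 : a < 1 / 2) :
    Tendsto (fun n : ℕ =>
        1 / (n : ℝ) ^ 3 * ∑ k ∈ Finset.Icc 1 n, (aseq a k) ^ 2 * (bseq a (k - 1)) ^ 2)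
      atTop (nhds (1 / (3 * (a + 1) ^ 2))) :=
  stmt_6_general a ha
end

section
/- For the elephant random walk with a = (2dp−1)/(2d−1) and martingale increments ε_n, the conditional second moment satisfies E[ε_{n+1} ε_{n+1}^T | F_n] = (1/d) I_d + a((1/n)Σ_n − (1/d)I_d) − (a/n)² S_n S_n^T almost surely, where Σ_n = ∑_{k=1}^n X_k X_k^T. -/
open scoped Classical
open MeasureTheory

noncomputable def erwDirections (d : ℕ) : Set (EuclideanSpace ℝ (Fin d)) :=
  {v | ∃ i : Fin d, v = EuclideanSpace.single i 1 ∨ v = -EuclideanSpace.single i 1}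

noncomputable def erwDirFinset (d : ℕ) : Finset (EuclideanSpace ℝ (Fin d)) :=
  (Finset.univ.image fun i : Fin d => (EuclideanSpace.single i (1:ℝ))) ∪
  (Finset.univ.image fun i : Fin d => -(EuclideanSpace.single i (1:ℝ)))

lemma mem_erwDirFinset {d : ℕ} {x : EuclideanSpace ℝ (Fin d)} :
    x ∈ erwDirFinset d ↔ x ∈ erwDirections d := by
  simp [erwDirFinset, erwDirections, eq_comm, or_comm, exists_or]

lemma erw_sum_pick {d : ℕ} {x : EuclideanSpace ℝ (Fin d)} (hx : x ∈ erwDirections d)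
    (g : EuclideanSpace ℝ (Fin d) → ℝ) :
    ∑ e ∈ erwDirFinset d, (if x = e then g e else 0) = g x := by
  rw [Finset.sum_ite_eq, if_pos (mem_erwDirFinset.2 hx)]

lemma erw_single_inj {d : ℕ} : Function.Injective fun i : Fin d => EuclideanSpace.single i (1:ℝ) := by
  intro i i' h
  have := congrArg (fun v : EuclideanSpace ℝ (Fin d) => v i) h
  simp only [EuclideanSpace.single_apply] at this
  by_contra hne
  rw [if_pos trivial, if_neg hne] at this
  norm_num at this

lemma erw_sum_eq {d : ℕ} (g : EuclideanSpace ℝ (Fin d) → ℝ) :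
    ∑ e ∈ erwDirFinset d, g e
      = ∑ i : Fin d, g (EuclideanSpace.single i 1)
        + ∑ i : Fin d, g (-(EuclideanSpace.single i 1)) := by
  have hdisj : Disjoint (Finset.univ.image fun i : Fin d => (EuclideanSpace.single i (1:ℝ)))
      (Finset.univ.image fun i : Fin d => -(EuclideanSpace.single i (1:ℝ))) := by
    rw [Finset.disjoint_left]
    rintro x hx hx'
    simp only [Finset.mem_image, Finset.mem_univ, true_and] at hx hx'
    obtain ⟨i, rfl⟩ := hx
    obtain ⟨i', hi'⟩ := hx'
    have := congrArg (fun v : EuclideanSpace ℝ (Fin d) => v i) hi'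
    simp only [EuclideanSpace.single_apply, PiLp.neg_apply, if_pos rfl] at this
    split at this <;> norm_num at this
  rw [erwDirFinset, Finset.sum_union hdisj, Finset.sum_image (fun i _ j _ h => erw_single_inj h),
    Finset.sum_image (fun i _ j _ h => erw_single_inj (neg_injective h))]

lemma erw_sum_coord {d : ℕ} (i : Fin d) :
    ∑ e ∈ erwDirFinset d, e i = 0 := by
  rw [erw_sum_eq (fun e => e i)]
  simp [EuclideanSpace.single_apply, PiLp.neg_apply]

lemma erw_sum_coord_mul {d : ℕ} (i j : Fin d) :
    ∑ e ∈ erwDirFinset d, e i * e j = if i = j then 2 else 0 := by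
  rw [erw_sum_eq (fun e => e i * e j)]
  simp only [EuclideanSpace.single_apply, PiLp.neg_apply, neg_mul_neg]
  rw [← two_mul]
  simp only [ite_mul, one_mul, zero_mul, mul_ite, mul_zero]
  rw [Finset.sum_ite_eq Finset.univ j (fun x => if i = x then (1:ℝ) else 0)]
  simp only [Finset.mem_univ, if_true]
  split <;> norm_num

lemma erw_key2 {d : ℕ} {x : EuclideanSpace ℝ (Fin d)} (hx : x ∈ erwDirections d)
    (p q : ℝ) (i j : Fin d) :
    ∑ e ∈ erwDirFinset d, (e i * e j) * (if x = e then p else q)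
      = q * (if i = j then 2 else 0) + (p - q) * (x i * x j) := by
  have : ∀ e : EuclideanSpace ℝ (Fin d),
      (e i * e j) * (if x = e then p else q)
        = (e i * e j) * q + (if x = e then (e i * e j) * (p - q) else 0) := by
    intro e; split <;> ring
  rw [Finset.sum_congr rfl fun e _ => this e, Finset.sum_add_distrib,
    erw_sum_pick hx (fun e => (e i * e j) * (p - q)), ← Finset.sum_mul, erw_sum_coord_mul]
  ring

lemma erw_key1 {d : ℕ} {x : EuclideanSpace ℝ (Fin d)} (hx : x ∈ erwDirections d)
    (p q : ℝ) (i : Fin d) :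
    ∑ e ∈ erwDirFinset d, e i * (if x = e then p else q) = (p - q) * x i := by
  have : ∀ e : EuclideanSpace ℝ (Fin d),
      e i * (if x = e then p else q)
        = e i * q + (if x = e then e i * (p - q) else 0) := by
    intro e; split <;> ring
  rw [Finset.sum_congr rfl fun e _ => this e, Finset.sum_add_distrib,
    erw_sum_pick hx (fun e => e i * (p - q)), ← Finset.sum_mul, erw_sum_coord]
  ring

lemma erw_abs_coord_le {d : ℕ} {x : EuclideanSpace ℝ (Fin d)} (hx : x ∈ erwDirections d)
    (i : Fin d) : |x i| ≤ 1 := by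
  obtain ⟨k, hk | hk⟩ := hx <;> subst hk <;>
    simp only [EuclideanSpace.single_apply, PiLp.neg_apply, abs_neg] <;>
    split <;> norm_num

lemma eventuallyEq_finset_sum' {α : Type*} {l : Filter α} {ι : Type*} (s : Finset ι) (f g : ι → α → ℝ)
    (h : ∀ i ∈ s, f i =ᶠ[l] g i) :
    (fun a => ∑ i ∈ s, f i a) =ᶠ[l] fun a => ∑ i ∈ s, g i a := by
  have := (Filter.eventually_all_finset s).mpr h
  filter_upwards [this] with a ha
  exact Finset.sum_congr rfl fun i hi => ha i hi

lemma integrable_of_bdd {Ω : Type*} [MeasurableSpace Ω] {μ : Measure Ω} [IsFiniteMeasure μ]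
    {f : Ω → ℝ} {C : ℝ} (hm : Measurable f) (h : ∀ ω, |f ω| ≤ C) : Integrable f μ :=
  ⟨hm.aestronglyMeasurable,
    HasFiniteIntegral.of_bounded (C := C) (ae_of_all _ (by simpa [Real.norm_eq_abs] using h))⟩

/-- For the elephant random walk with `a = (2dp−1)/(2d−1)`, the martingale increments
`ε_{n+1} = X_{n+1} − (a/n) S_n` satisfy, entrywise,
`E[ε_{n+1} ε_{n+1}ᵀ | F_n] = (1/d) I_d + a((1/n)Σ_n − (1/d)I_d) − (a/n)² S_n S_nᵀ` a.s.,
where `Σ_n = ∑_{k=1}^n X_k X_kᵀ`. -/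
theorem stmt_14 {Ω : Type*} [m : MeasurableSpace Ω] (μ : Measure Ω) [IsProbabilityMeasure μ]
    (d : ℕ) (hd : 1 ≤ d) (p : ℝ) (hp : p ∈ Set.Icc (0 : ℝ) 1)
    (X : ℕ → Ω → EuclideanSpace ℝ (Fin d))
    (hXmeas : ∀ k, Measurable (X k))
    (ℱ : ℕ → MeasurableSpace Ω)
    (hℱ : ∀ n, ℱ n = ⨆ k ∈ Finset.Icc 1 n, MeasurableSpace.comap (X k) inferInstance)
    (hℱle : ∀ n, ℱ n ≤ m)
    (hdir : ∀ k ω, X k ω ∈ erwDirections d)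
    (hstep : ∀ n, 1 ≤ n → ∀ e ∈ erwDirections d,
      μ[(fun ω => Set.indicator {ω' | X (n + 1) ω' = e} (fun _ => (1 : ℝ)) ω) | ℱ n]
        =ᵐ[μ] fun ω => (1 / (n : ℝ)) * ∑ k ∈ Finset.Icc 1 n,
          (if X k ω = e then p else (1 - p) / (2 * d - 1)))
    (a : ℝ) (ha : a = (2 * d * p - 1) / (2 * d - 1))
    (S : ℕ → Ω → EuclideanSpace ℝ (Fin d))
    (hS : ∀ n ω, S n ω = ∑ k ∈ Finset.Icc 1 n, X k ω)
    (ε : ℕ → Ω → EuclideanSpace ℝ (Fin d))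
    (hε : ∀ n, 1 ≤ n → ∀ ω, ε (n + 1) ω = X (n + 1) ω - (a / n) • S n ω) :
    ∀ n, 1 ≤ n → ∀ i j : Fin d,
      μ[(fun ω => ε (n + 1) ω i * ε (n + 1) ω j) | ℱ n]
        =ᵐ[μ] fun ω =>
          (1 / d) * (if i = j then 1 else 0)
            + a * ((1 / (n : ℝ)) * ∑ k ∈ Finset.Icc 1 n, X k ω i * X k ω j
                - (1 / d) * (if i = j then 1 else 0))
            - (a / n) ^ 2 * (S n ω i * S n ω j) := by
  intro n hn i j
  have hd0 : (d : ℝ) ≠ 0 := Nat.cast_ne_zero.mpr (by omega)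
  have hd1 : (1 : ℝ) ≤ (d : ℝ) := by exact_mod_cast hd
  have h2d : (2 * (d : ℝ) - 1) ≠ 0 := by nlinarith
  have hn0 : (n : ℝ) ≠ 0 := Nat.cast_ne_zero.mpr (by omega)
  have hm := hℱle n
  set q : ℝ := (1 - p) / (2 * (d : ℝ) - 1) with hq
  have hpq : p - q = a := by rw [ha, hq]; field_simp; ring
  -- coordinate measurability and bounds
  have hXc : ∀ k (i0 : Fin d), Measurable fun ω => X k ω i0 :=
    fun k i0 => (measurable_pi_apply i0).comp ((WithLp.measurable_ofLp 2 _).comp (hXmeas k))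
  have hXb : ∀ k ω (i0 : Fin d), |X k ω i0| ≤ 1 := fun k ω i0 => erw_abs_coord_le (hdir k ω) i0
  have hSco : ∀ ω (i0 : Fin d), S n ω i0 = ∑ k ∈ Finset.Icc 1 n, X k ω i0 := by
    intro ω i0; rw [hS, WithLp.ofLp_sum]; exact Finset.sum_apply i0 _ _
  have hSc : ∀ i0 : Fin d, Measurable fun ω => S n ω i0 := by
    intro i0
    have : (fun ω => S n ω i0) = fun ω => ∑ k ∈ Finset.Icc 1 n, X k ω i0 := by
      funext ω; exact hSco ω i0
    rw [this]
    exact Finset.measurable_sum _ fun k _ => hXc k i0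
  have hSb : ∀ ω (i0 : Fin d), |S n ω i0| ≤ (n : ℝ) := by
    intro ω i0
    rw [hSco]
    calc |∑ k ∈ Finset.Icc 1 n, X k ω i0| ≤ ∑ k ∈ Finset.Icc 1 n, |X k ω i0| :=
          Finset.abs_sum_le_sum_abs _ _
      _ ≤ ∑ k ∈ Finset.Icc 1 n, (1 : ℝ) := Finset.sum_le_sum fun k _ => hXb k ω i0
      _ = (n : ℝ) := by simp [Nat.card_Icc]
  have habs : ∀ (u v Cu Cv : ℝ), |u| ≤ Cu → |v| ≤ Cv → |u * v| ≤ Cu * Cv := by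
    intro u v Cu Cv h1 h2
    rw [abs_mul]
    exact mul_le_mul h1 h2 (abs_nonneg _) ((abs_nonneg u).trans h1)
  -- ℱ n measurability
  have hXFm : ∀ k ∈ Finset.Icc 1 n, Measurable[ℱ n] (X k) := by
    intro k hk
    rw [hℱ n]
    exact measurable_iff_comap_le.mpr (le_biSup (f := fun k => MeasurableSpace.comap (X k) inferInstance) hk)
  have hSFc : ∀ i0 : Fin d, StronglyMeasurable[ℱ n] fun ω => S n ω i0 := by
    intro i0
    have : (fun ω => S n ω i0) = fun ω => ∑ k ∈ Finset.Icc 1 n, X k ω i0 := by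
      funext ω; exact hSco ω i0
    rw [this]
    exact Measurable.stronglyMeasurable
      (Finset.measurable_sum _ fun k hk => (measurable_pi_apply i0).comp ((WithLp.measurable_ofLp 2 _).comp (hXFm k hk)))
  -- the indicator functions
  set ind : EuclideanSpace ℝ (Fin d) → Ω → ℝ :=
    fun e ω => Set.indicator {ω' | X (n + 1) ω' = e} (fun _ => (1 : ℝ)) ω with hind
  have hind_eq : ∀ e ω, ind e ω = if X (n + 1) ω = e then 1 else 0 := by
    intro e ω
    simp [hind, Set.indicator_apply, Set.mem_setOf_eq]
  have hind_meas : ∀ e, Measurable (ind e) := by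
    intro e
    have hset : MeasurableSet {ω' | X (n + 1) ω' = e} :=
      (hXmeas (n + 1)) (measurableSet_singleton e)
    exact measurable_const.indicator hset
  have hind_int : ∀ e, Integrable (ind e) μ := by
    intro e
    refine integrable_of_bdd (hind_meas e) (C := 1) fun ω => ?_
    rw [hind_eq]; split <;> norm_num
  -- conditional expectation of a single coordinate
  have hcondX : ∀ i0 : Fin d,
      μ[(fun ω => X (n + 1) ω i0)|ℱ n] =ᵐ[μ] fun ω => a * ((1 / (n : ℝ)) * S n ω i0) := by
    intro i0
    have hrep : (fun ω => X (n + 1) ω i0)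
        = ∑ e ∈ erwDirFinset d, (e i0) • ind e := by
      funext ω
      rw [Finset.sum_apply]
      simp only [Pi.smul_apply, smul_eq_mul, hind_eq, mul_ite, mul_one, mul_zero]
      exact (erw_sum_pick (hdir (n + 1) ω) fun e => e i0).symm
    rw [hrep]
    have h1 := condExp_finset_sum (μ := μ) (m := ℱ n)
      (f := fun e => (e i0) • ind e) (s := erwDirFinset d)
      (fun e _ => (hind_int e).smul (e i0))
    refine h1.trans ?_
    have h2 : ∀ e ∈ erwDirFinset d, μ[(e i0) • ind e|ℱ n]
        =ᵐ[μ] fun ω => e i0 * ((1 / (n : ℝ)) * ∑ k ∈ Finset.Icc 1 n,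
          (if X k ω = e then p else q)) := by
      intro e he
      refine (condExp_smul (e i0) (ind e) (ℱ n)).trans ?_
      have h3 := hstep n hn e (mem_erwDirFinset.1 he)
      filter_upwards [h3] with ω hω
      simp only [Pi.smul_apply, smul_eq_mul]
      rw [hω]
    have h4 : (∑ e ∈ erwDirFinset d, μ[(e i0) • ind e|ℱ n]) =ᵐ[μ]
        fun ω => ∑ e ∈ erwDirFinset d, e i0 * ((1 / (n : ℝ)) * ∑ k ∈ Finset.Icc 1 n,
          (if X k ω = e then p else q)) := by
      have := eventuallyEq_finset_sum' (l := ae μ) (erwDirFinset d)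
        (fun e ω => (μ[(e i0) • ind e|ℱ n]) ω)
        (fun e ω => e i0 * ((1 / (n : ℝ)) * ∑ k ∈ Finset.Icc 1 n,
          (if X k ω = e then p else q))) h2
      refine Filter.EventuallyEq.trans ?_ this
      filter_upwards with ω
      rw [Finset.sum_apply]
    refine h4.trans ?_
    filter_upwards with ω
    have h5 : ∀ e : EuclideanSpace ℝ (Fin d),
        e i0 * ((1 / (n : ℝ)) * ∑ k ∈ Finset.Icc 1 n, (if X k ω = e then p else q))
          = (1 / (n : ℝ)) * ∑ k ∈ Finset.Icc 1 n, e i0 * (if X k ω = e then p else q) := by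
      intro e; rw [Finset.mul_sum, Finset.mul_sum, Finset.mul_sum]; ring_nf
    rw [Finset.sum_congr rfl fun e _ => h5 e, ← Finset.mul_sum, Finset.sum_comm]
    rw [Finset.sum_congr rfl fun k _ => erw_key1 (hdir k ω) p q i0, ← Finset.mul_sum,
      hSco ω i0, hpq]
    ring
  -- conditional expectation of a product of coordinates
  have hcondXX :
      μ[(fun ω => X (n + 1) ω i * X (n + 1) ω j)|ℱ n] =ᵐ[μ]
        fun ω => q * 2 * (if i = j then 1 else 0)
          + a * ((1 / (n : ℝ)) * ∑ k ∈ Finset.Icc 1 n, X k ω i * X k ω j) := by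
    have hrep : (fun ω => X (n + 1) ω i * X (n + 1) ω j)
        = ∑ e ∈ erwDirFinset d, (e i * e j) • ind e := by
      funext ω
      rw [Finset.sum_apply]
      simp only [Pi.smul_apply, smul_eq_mul, hind_eq, mul_ite, mul_one, mul_zero]
      exact (erw_sum_pick (hdir (n + 1) ω) fun e => e i * e j).symm
    rw [hrep]
    have h1 := condExp_finset_sum (μ := μ) (m := ℱ n)
      (f := fun e => (e i * e j) • ind e) (s := erwDirFinset d)
      (fun e _ => (hind_int e).smul (e i * e j))
    refine h1.trans ?_
    have h2 : ∀ e ∈ erwDirFinset d, μ[(e i * e j) • ind e|ℱ n]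
        =ᵐ[μ] fun ω => (e i * e j) * ((1 / (n : ℝ)) * ∑ k ∈ Finset.Icc 1 n,
          (if X k ω = e then p else q)) := by
      intro e he
      refine (condExp_smul (e i * e j) (ind e) (ℱ n)).trans ?_
      have h3 := hstep n hn e (mem_erwDirFinset.1 he)
      filter_upwards [h3] with ω hω
      simp only [Pi.smul_apply, smul_eq_mul]
      rw [hω]
    have h4 : (∑ e ∈ erwDirFinset d, μ[(e i * e j) • ind e|ℱ n]) =ᵐ[μ]
        fun ω => ∑ e ∈ erwDirFinset d, (e i * e j) * ((1 / (n : ℝ)) * ∑ k ∈ Finset.Icc 1 n,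
          (if X k ω = e then p else q)) := by
      have := eventuallyEq_finset_sum' (l := ae μ) (erwDirFinset d)
        (fun e ω => (μ[(e i * e j) • ind e|ℱ n]) ω)
        (fun e ω => (e i * e j) * ((1 / (n : ℝ)) * ∑ k ∈ Finset.Icc 1 n,
          (if X k ω = e then p else q))) h2
      refine Filter.EventuallyEq.trans ?_ this
      filter_upwards with ω
      rw [Finset.sum_apply]
    refine h4.trans ?_
    filter_upwards with ω
    have h5 : ∀ e : EuclideanSpace ℝ (Fin d),
        (e i * e j) * ((1 / (n : ℝ)) * ∑ k ∈ Finset.Icc 1 n, (if X k ω = e then p else q))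
          = (1 / (n : ℝ)) * ∑ k ∈ Finset.Icc 1 n, (e i * e j) * (if X k ω = e then p else q) := by
      intro e; rw [Finset.mul_sum, Finset.mul_sum, Finset.mul_sum]; ring_nf
    rw [Finset.sum_congr rfl fun e _ => h5 e, ← Finset.mul_sum, Finset.sum_comm]
    rw [Finset.sum_congr rfl fun k _ => erw_key2 (hdir k ω) p q i j]
    rw [Finset.sum_add_distrib, Finset.sum_const, Nat.card_Icc, ← Finset.mul_sum]
    simp only [nsmul_eq_mul]
    push_cast
    rw [hpq]
    field_simp
    split <;> ring
  -- the expansion of ε_i ε_j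
  have hεrep : (fun ω => ε (n + 1) ω i * ε (n + 1) ω j)
      = (fun ω => X (n + 1) ω i * X (n + 1) ω j)
        + ((fun ω => -(a / (n : ℝ)) * S n ω j) * (fun ω => X (n + 1) ω i)
          + ((fun ω => -(a / (n : ℝ)) * S n ω i) * (fun ω => X (n + 1) ω j)
            + fun ω => ((a / (n : ℝ)) * S n ω i) * ((a / (n : ℝ)) * S n ω j))) := by
    funext ω
    simp only [Pi.add_apply, Pi.mul_apply]
    rw [hε n hn ω]
    simp only [PiLp.sub_apply, PiLp.smul_apply, smul_eq_mul]
    ring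
  rw [hεrep]
  -- integrability of the pieces
  have hif1 : Integrable (fun ω => X (n + 1) ω i * X (n + 1) ω j) μ :=
    integrable_of_bdd ((hXc (n + 1) i).mul (hXc (n + 1) j)) (C := 1 * 1)
      fun ω => habs _ _ _ _ (hXb (n + 1) ω i) (hXb (n + 1) ω j)
  have hif2 : Integrable ((fun ω => -(a / (n : ℝ)) * S n ω j) * fun ω => X (n + 1) ω i) μ :=
    integrable_of_bdd (((hSc j).const_mul _).mul (hXc (n + 1) i))
      (C := (|(-(a / (n : ℝ)))| * n) * 1)
      fun ω => habs _ _ _ _ (habs _ _ _ _ le_rfl (hSb ω j)) (hXb (n + 1) ω i)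
  have hif3 : Integrable ((fun ω => -(a / (n : ℝ)) * S n ω i) * fun ω => X (n + 1) ω j) μ :=
    integrable_of_bdd (((hSc i).const_mul _).mul (hXc (n + 1) j))
      (C := (|(-(a / (n : ℝ)))| * n) * 1)
      fun ω => habs _ _ _ _ (habs _ _ _ _ le_rfl (hSb ω i)) (hXb (n + 1) ω j)
  have hif4 : Integrable (fun ω => ((a / (n : ℝ)) * S n ω i) * ((a / (n : ℝ)) * S n ω j)) μ :=
    integrable_of_bdd (((hSc i).const_mul _).mul ((hSc j).const_mul _))
      (C := (|(a / (n : ℝ))| * n) * (|(a / (n : ℝ))| * n))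
      fun ω => habs _ _ _ _ (habs _ _ _ _ le_rfl (hSb ω i)) (habs _ _ _ _ le_rfl (hSb ω j))
  -- conditional expectations of the pieces
  have hc2 : μ[(fun ω => -(a / (n : ℝ)) * S n ω j) * (fun ω => X (n + 1) ω i)|ℱ n]
      =ᵐ[μ] fun ω => (-(a / (n : ℝ)) * S n ω j) * (a * ((1 / (n : ℝ)) * S n ω i)) := by
    refine (condExp_mul_of_stronglyMeasurable_left ((hSFc j).const_mul _) hif2
      (integrable_of_bdd (hXc (n + 1) i) (C := 1) fun ω => hXb (n + 1) ω i)).trans ?_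
    filter_upwards [hcondX i] with ω hω
    simp only [Pi.mul_apply]
    rw [hω]
  have hc3 : μ[(fun ω => -(a / (n : ℝ)) * S n ω i) * (fun ω => X (n + 1) ω j)|ℱ n]
      =ᵐ[μ] fun ω => (-(a / (n : ℝ)) * S n ω i) * (a * ((1 / (n : ℝ)) * S n ω j)) := by
    refine (condExp_mul_of_stronglyMeasurable_left ((hSFc i).const_mul _) hif3
      (integrable_of_bdd (hXc (n + 1) j) (C := 1) fun ω => hXb (n + 1) ω j)).trans ?_
    filter_upwards [hcondX j] with ω hω
    simp only [Pi.mul_apply]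
    rw [hω]
  have hc4 : μ[(fun ω => ((a / (n : ℝ)) * S n ω i) * ((a / (n : ℝ)) * S n ω j))|ℱ n]
      =ᵐ[μ] fun ω => ((a / (n : ℝ)) * S n ω i) * ((a / (n : ℝ)) * S n ω j) :=
    Filter.EventuallyEq.of_eq (condExp_of_stronglyMeasurable hm
      (((hSFc i).const_mul _).mul ((hSFc j).const_mul _)) hif4)
  -- assemble
  refine (condExp_add hif1 (hif2.add (hif3.add hif4)) _).trans ?_
  have hmid := condExp_add (μ := μ) (m := ℱ n) hif2 (hif3.add hif4)
  have hmid2 := condExp_add (μ := μ) (m := ℱ n) hif3 hif4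
  have hkey : q * 2 = 1 / (d : ℝ) - a * (1 / d) := by
    rw [hq, ha]; field_simp; ring
  filter_upwards [hcondXX, hc2, hc3, hc4, hmid, hmid2] with ω h1 h2 h3 h4 h5 h6
  simp only [Pi.add_apply] at *
  rw [h5, h6, h1, h2, h3, h4]
  linear_combination (if i = j then (1 : ℝ) else 0) * hkey
end
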